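/- arXiv:1112.0673 — 4 statements merged into one kernel-verified Lean document; each statement's English description precedes it below -/
import Mathlib

section
/- Let A and B be bounded positive self-adjoint operators on a Hilbert space, g a bounded self-adjoint operator with 0 ≤ g ≤ 1, and h = √(1 − g²). Then √(gAg + hBh) ≥ g√A g + h√B h. -/
/-!
The element `h = √(1 - g²)` commutes with `g` and `g² + h² = 1`. Hence the square of
`T = g √A g + h √B h` falls short of `g A g + h B h` by `P P⋆ ≥ 0`, where
`P = g √A h - h √B g`, the cross terms cancelling by commutativity. As `T ≥ 0` and the square
root is operator monotone, `T = √(T²) ≤ √(g A g + h B h)`.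
-/

open CFC

theorem conj_add_conj_mul_self_le {R : Type*} [Ring R] [StarRing R] [PartialOrder R]
    [StarOrderedRing R] {a b g h : R} (ha : IsSelfAdjoint a) (hb : IsSelfAdjoint b)
    (hg : IsSelfAdjoint g) (hh : IsSelfAdjoint h) (hgh : Commute g h)
    (hsum : g * g + h * h = 1) :
    (g * a * g + h * b * h) * (g * a * g + h * b * h) ≤ g * (a * a) * g + h * (b * b) * h := by
  have hP : star (g * a * h - h * b * g) = h * a * g - g * b * h := by
    simp only [star_sub, star_mul, ha.star_eq, hb.star_eq, hg.star_eq, hh.star_eq, mul_assoc]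
  calc (g * a * g + h * b * h) * (g * a * g + h * b * h)
      ≤ (g * a * g + h * b * h) * (g * a * g + h * b * h)
          + (g * a * h - h * b * g) * star (g * a * h - h * b * g) :=
        le_add_of_nonneg_right (mul_star_self_nonneg _)
    _ = g * a * (g * g + h * h) * a * g + h * b * (g * g + h * h) * b * h
          + g * a * (g * h - h * g) * b * h + h * b * (h * g - g * h) * a * g := by
        rw [hP]; noncomm_ring
    _ = g * (a * a) * g + h * (b * b) * h := by
        rw [hsum, hgh.eq, sub_self]; noncomm_ring

lemma CStarAlgebra.one_sub_mul_self_nonneg {A : Type*} [CStarAlgebra A] [PartialOrder A]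
    [StarOrderedRing A] {a : A} (ha₀ : -1 ≤ a) (ha₁ : a ≤ 1) : 0 ≤ 1 - a * a := by
  have hfactor : 1 - a * a = (1 - a) * (1 + a) := by noncomm_ring
  rw [hfactor]
  exact Commute.mul_nonneg (sub_nonneg.2 ha₁) (by simpa [neg_le_iff_add_nonneg'] using ha₀)
    ((Commute.one_left _).sub_left ((Commute.one_right a).add_right (Commute.refl a)))

lemma Commute.sqrt_right {A : Type*} [CStarAlgebra A] [PartialOrder A] [StarOrderedRing A]
    {a b : A} (hab : Commute a b) : Commute a (sqrt b) := by
  rw [sqrt_eq_cfc]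
  exact (hab.symm.cfc_nnreal _).symm

theorem stmt_2_general {H : Type*} [NormedAddCommGroup H] [InnerProductSpace ℂ H]
    [CompleteSpace H] (A B g : H →L[ℂ] H)
    (hApos : 0 ≤ A)
    (hBpos : 0 ≤ B)
    (hgpos : 0 ≤ g) (hg1 : g ≤ 1) :
    g * CFC.sqrt A * g + CFC.sqrt (1 - g * g) * CFC.sqrt B * CFC.sqrt (1 - g * g)
      ≤ CFC.sqrt (g * A * g + CFC.sqrt (1 - g * g) * B * CFC.sqrt (1 - g * g)) := by
  set h := sqrt (1 - g * g)
  have hgg : 0 ≤ 1 - g * g :=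
    CStarAlgebra.one_sub_mul_self_nonneg ((neg_nonpos.2 zero_le_one).trans hgpos) hg1
  have hsum : g * g + h * h = 1 := by rw [sqrt_mul_sqrt_self _ hgg]; abel
  have hgh : Commute g h :=
    ((Commute.one_right g).sub_right ((Commute.refl g).mul_right (Commute.refl g))).sqrt_right
  have hT : 0 ≤ g * sqrt A * g + h * sqrt B * h :=
    add_nonneg (conjugate_nonneg_of_nonneg (sqrt_nonneg A) hgpos)
      (conjugate_nonneg_of_nonneg (sqrt_nonneg B) (sqrt_nonneg _))
  have hsq := conj_add_conj_mul_self_le (sqrt_nonneg A).isSelfAdjoint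
    (sqrt_nonneg B).isSelfAdjoint hgpos.isSelfAdjoint (sqrt_nonneg _).isSelfAdjoint hgh hsum
  rw [sqrt_mul_sqrt_self A hApos, sqrt_mul_sqrt_self B hBpos] at hsq
  calc _ = sqrt ((g * sqrt A * g + h * sqrt B * h) * (g * sqrt A * g + h * sqrt B * h)) :=
        (sqrt_mul_self _ hT).symm
    _ ≤ _ := sqrt_le_sqrt _ _ hsq

/-- Pull-out estimate (two-term version): for bounded positive self-adjoint operators
A, B on a Hilbert space and a bounded self-adjoint g with 0 ≤ g ≤ 1 and h = √(1 − g²),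
one has √(gAg + hBh) ≥ g√A g + h√B h. -/
theorem stmt_2 {H : Type*} [NormedAddCommGroup H] [InnerProductSpace ℂ H]
    [CompleteSpace H] (A B g : H →L[ℂ] H)
    (hA : IsSelfAdjoint A) (hApos : 0 ≤ A)
    (hB : IsSelfAdjoint B) (hBpos : 0 ≤ B)
    (hg : IsSelfAdjoint g) (hgpos : 0 ≤ g) (hg1 : g ≤ 1) :
    g * CFC.sqrt A * g + CFC.sqrt (1 - g * g) * CFC.sqrt B * CFC.sqrt (1 - g * g)
      ≤ CFC.sqrt (g * A * g + CFC.sqrt (1 - g * g) * B * CFC.sqrt (1 - g * g)) :=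
  stmt_2_general A B g hApos hBpos hgpos hg1
end

section
/- Let P and Q be positive (self-adjoint, nonnegative) operators on a Hilbert space such that [P² − Q²]₋, the negative part of P² − Q², is trace class with trace tr[−(P²−Q²)₋]. Then tr (P − Q)₋ ≥ − tr ( [−(P² − Q²)₋] )^{1/2}, i.e., the sum of the negative eigenvalues of P − Q is bounded below by minus the sum of square roots of the negative eigenvalues of P² − Q². -/
open Matrix ComplexOrder

/-!
Put `B = (P² - Q²)₋` and `S = √(P² + B)`. Operator monotonicity of the square root gives
`P ≤ S`, and also `Q ≤ S` because `P² + B - Q² = (P² - Q²)₊ ≥ 0`. Thus `P - Q ≥ -(S - P)`, and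
compressing to the negative spectral subspace of `P - Q` gives
`tr (P - Q)₋ ≤ tr (S - P) = tr √(P² + B) - tr P ≤ tr √B`.
The last step is the trace subadditivity `tr √(X + Y) ≤ tr √X + tr √Y`: with `s = √(X + Y)` and
its pseudo-inverse `s⁺ = cfc (·⁻¹) s` (a genuine pseudo-inverse since `0⁻¹ = 0`), one has
`tr s = tr (X s⁺) + tr (Y s⁺)`, and `t s⁺ t ≤ t` whenever `0 ≤ t ≤ s`.
-/

open scoped MatrixOrder Matrix.Norms.L2Operator

namespace CStarAlgebra

variable {A : Type*} [CStarAlgebra A] [PartialOrder A] [StarOrderedRing A]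

open CFC

lemma star_mul_self_le_one_of_mul_star_le_one {a : A} (h : a * star a ≤ 1) : star a * a ≤ 1 := by
  rw [← norm_le_one_iff_of_nonneg _ (mul_star_self_nonneg a)] at h
  rwa [← norm_le_one_iff_of_nonneg _ (star_mul_self_nonneg a), CStarRing.norm_star_mul_self,
    ← CStarRing.norm_self_mul_star]

lemma conjugate_cfc_inv_le_self {s t : A} (hfin : (spectrum ℝ s).Finite) (ht : 0 ≤ t)
    (hts : t ≤ s) : t * cfc (·⁻¹ : ℝ → ℝ) s * t ≤ t := by
  have hs : 0 ≤ s := ht.trans hts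
  have hc (f : ℝ → ℝ) : ContinuousOn f (spectrum ℝ s) := hfin.continuousOn f
  -- `r` is the pseudo-inverse of `√s`; the C⋆-identity turns `a a⋆ ≤ 1` into `a⋆ a ≤ 1`
  -- for `a = r √t`.
  set r := cfc (fun x : ℝ => (√x)⁻¹) s
  have hr : IsSelfAdjoint r := cfc_predicate _ s
  have hrr : r * r = cfc (·⁻¹ : ℝ → ℝ) s := by
    rw [← cfc_mul _ _ _ (hc _) (hc _)]
    refine cfc_congr fun x hx => ?_
    rw [← mul_inv, Real.mul_self_sqrt (spectrum_nonneg_of_nonneg hs hx)]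
  have hrsr : r * s * r ≤ 1 := by
    conv_lhs => rw [← cfc_id' ℝ s, ← cfc_mul _ _ _ (hc _) (hc _), ← cfc_mul _ _ _ (hc _) (hc _)]
    refine cfc_le_one _ _ fun x _ => ?_
    rcases le_or_gt x 0 with hx | hx
    · simp [Real.sqrt_eq_zero'.mpr hx]
    · rw [mul_comm, ← mul_assoc, ← mul_inv, Real.mul_self_sqrt hx.le, inv_mul_cancel₀ hx.ne']
  have hmul : (r * sqrt t) * star (r * sqrt t) ≤ 1 := by
    rw [star_mul, (sqrt_nonneg t).isSelfAdjoint.star_eq, hr.star_eq, mul_assoc r,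
      ← mul_assoc (sqrt t), sqrt_mul_sqrt_self t, ← mul_assoc]
    exact (hr.conjugate_le_conjugate hts).trans hrsr
  calc t * cfc (·⁻¹ : ℝ → ℝ) s * t
      = sqrt t * (star (r * sqrt t) * (r * sqrt t)) * sqrt t := by
        rw [star_mul, (sqrt_nonneg t).isSelfAdjoint.star_eq, hr.star_eq, ← hrr]
        conv_lhs => rw [← sqrt_mul_sqrt_self t]
        noncomm_ring
    _ ≤ sqrt t * 1 * sqrt t :=
        conjugate_le_conjugate_of_nonneg (star_mul_self_le_one_of_mul_star_le_one hmul)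
          (sqrt_nonneg t)
    _ = t := by rw [mul_one, sqrt_mul_sqrt_self t]

end CStarAlgebra

namespace Matrix

variable {n 𝕜 : Type*} [Fintype n] [RCLike 𝕜]

lemma trace_mono {A B : Matrix n n 𝕜} (h : A ≤ B) : A.trace ≤ B.trace :=
  sub_nonneg.mp (trace_sub B A ▸ (le_iff.mp h).trace_nonneg)

variable [DecidableEq n]

lemma IsHermitian.trace_cfc {A : Matrix n n 𝕜} (hA : A.IsHermitian) (f : ℝ → ℝ) :
    (cfc f A).trace = ∑ i, (f (hA.eigenvalues i) : 𝕜) := by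
  rw [hA.cfc_eq, IsHermitian.cfc, Unitary.conjStarAlgAut_apply, trace_mul_cycle,
    Unitary.star_mul_self_of_mem (SetLike.coe_mem _), one_mul, trace_diagonal]
  rfl

lemma trace_sqrt_add_le {X Y : Matrix n n ℂ} (hX : 0 ≤ X) (hY : 0 ≤ Y) :
    (CFC.sqrt (X + Y)).trace ≤ (CFC.sqrt X).trace + (CFC.sqrt Y).trace := by
  set s := CFC.sqrt (X + Y)
  set p := cfc (·⁻¹ : ℝ → ℝ) s
  have hfin : (spectrum ℝ s).Finite := finite_real_spectrum
  have hc (f : ℝ → ℝ) : ContinuousOn f (spectrum ℝ s) := hfin.continuousOn f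
  have hss : s * s * p = s := calc
    s * s * p = cfc (fun x => x * x * x⁻¹) s := by
      rw [cfc_mul (fun x => x * x) (·⁻¹) s (hc _) (hc _),
        cfc_mul (fun x => x) (fun x => x) s (hc _) (hc _), cfc_id' ℝ s]
    _ = cfc (fun x => x) s := cfc_congr fun x _ => mul_self_mul_inv x
    _ = s := cfc_id' ℝ s
  have hs : (X + Y) * p = s := by
    rw [← CFC.sqrt_mul_sqrt_self (X + Y) (add_nonneg hX hY)]
    exact hss
  have hle {Z : Matrix n n ℂ} (hZ : 0 ≤ Z) (hZs : Z ≤ X + Y) :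
      (Z * p).trace ≤ (CFC.sqrt Z).trace := by
    have h := trace_mono <| CStarAlgebra.conjugate_cfc_inv_le_self hfin (CFC.sqrt_nonneg Z)
      (CFC.sqrt_le_sqrt _ _ hZs)
    rwa [trace_mul_cycle, CFC.sqrt_mul_sqrt_self Z] at h
  calc s.trace = (X * p).trace + (Y * p).trace := by rw [← hs, add_mul, trace_add]
    _ ≤ _ := add_le_add (hle hX (le_add_of_nonneg_right hY)) (hle hY (le_add_of_nonneg_left hX))

lemma trace_conjugate_le_of_isStarProjection {π C : Matrix n n 𝕜} (hπ : IsStarProjection π)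
    (hC : 0 ≤ C) : (π * C * π).trace ≤ C.trace := by
  have hπ' := hπ.one_sub
  have hcompl : 0 ≤ ((1 - π) * C * (1 - π)).trace :=
    (nonneg_iff_posSemidef.mp (hπ'.isSelfAdjoint.conjugate_nonneg hC)).trace_nonneg
  have hsplit : (π * C * π).trace + ((1 - π) * C * (1 - π)).trace = C.trace := by
    rw [trace_mul_cycle, hπ.isIdempotentElem.eq, trace_mul_cycle, hπ'.isIdempotentElem.eq,
      ← trace_add, ← add_mul, add_sub_cancel, one_mul]
  exact hsplit ▸ le_add_of_nonneg_right hcompl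

lemma trace_negPart_le {D C : Matrix n n 𝕜} (hC : 0 ≤ C) (hDC : -C ≤ D) :
    (D⁻).trace ≤ C.trace := by
  have hD : IsSelfAdjoint D := by
    simpa using (IsSelfAdjoint.of_nonneg (sub_nonneg.mpr hDC)).add hC.isSelfAdjoint.neg
  have hc (f : ℝ → ℝ) : ContinuousOn f (spectrum ℝ D) := finite_real_spectrum.continuousOn f
  set π := cfc (fun x : ℝ => if x < 0 then (1 : ℝ) else 0) D
  have hπ : IsStarProjection π := by
    refine ⟨?_, cfc_predicate _ _⟩
    rw [IsIdempotentElem, ← cfc_mul _ _ _ (hc _) (hc _)]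
    exact cfc_congr fun x _ => by split_ifs <;> simp
  have hneg : D⁻ = -(π * D * π) := by
    rw [CFC.negPart_def, cfcₙ_eq_cfc]
    conv_rhs => rw [← cfc_id' ℝ D, ← cfc_mul _ _ _ (hc _) (hc _), ← cfc_mul _ _ _ (hc _) (hc _),
      ← cfc_neg]
    refine cfc_congr fun x _ => ?_
    split_ifs with h
    · simp [negPart_eq_neg.mpr h.le]
    · simp [negPart_eq_zero.mpr (not_lt.mp h)]
  calc (D⁻).trace = -(π * D * π).trace := by rw [hneg, trace_neg]
    _ ≤ (π * C * π).trace := by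
      have := trace_mono (hπ.isSelfAdjoint.conjugate_le_conjugate hDC)
      rwa [mul_neg, neg_mul, trace_neg, neg_le] at this
    _ ≤ C.trace := trace_conjugate_le_of_isStarProjection hπ hC

theorem trace_negPart_sub_le {P Q : Matrix n n ℂ} (hP : 0 ≤ P) (hQ : 0 ≤ Q) :
    ((P - Q)⁻).trace ≤ (CFC.sqrt ((P ^ 2 - Q ^ 2)⁻)).trace := by
  set B := (P ^ 2 - Q ^ 2)⁻
  have hB : 0 ≤ B := CFC.negPart_nonneg _
  have hP2 : 0 ≤ P ^ 2 := by cfc_tac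
  set S := CFC.sqrt (P ^ 2 + B)
  have hPS : P ≤ S := calc
    P = CFC.sqrt (P ^ 2) := (CFC.sqrt_sq P).symm
    _ ≤ S := CFC.sqrt_le_sqrt _ _ (le_add_of_nonneg_right hB)
  have hQS : Q ≤ S := calc
    Q = CFC.sqrt (Q ^ 2) := (CFC.sqrt_sq Q).symm
    _ ≤ S := by
      refine CFC.sqrt_le_sqrt _ _ (sub_nonneg.mp ?_)
      rw [← sub_add_eq_add_sub, ← sub_eq_iff_eq_add.mp (CFC.posPart_sub_negPart _)]
      exact CFC.posPart_nonneg _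
  calc ((P - Q)⁻).trace ≤ (S - P).trace :=
        trace_negPart_le (sub_nonneg.mpr hPS) (by rw [neg_sub]; exact sub_le_sub_left hQS P)
    _ = S.trace - P.trace := trace_sub _ _
    _ ≤ (CFC.sqrt B).trace := by
      have h := trace_sqrt_add_le hP2 hB
      rwa [CFC.sqrt_sq P, ← sub_le_iff_le_add'] at h

end Matrix

/-- BKS inequality: for positive operators P, Q,
tr (P − Q)₋ ≥ − tr ([−(P² − Q²)₋])^{1/2}, i.e. the sum of the negative eigenvalues
of P − Q is bounded below by minus the sum of the square roots of the negative
eigenvalues of P² − Q². -/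
theorem stmt_3 {n : ℕ} (P Q : Matrix (Fin n) (Fin n) ℂ)
    (hP : P.PosSemidef) (hQ : Q.PosSemidef)
    (hPQ : (P - Q).IsHermitian) (hPQ2 : (P ^ 2 - Q ^ 2).IsHermitian) :
    ∑ i, min (hPQ.eigenvalues i) 0
      ≥ -∑ i, Real.sqrt (-(min (hPQ2.eigenvalues i) 0)) := by
  have h := trace_negPart_sub_le hP.nonneg hQ.nonneg
  have hlhs : ((P - Q)⁻).trace = ∑ i, (((hPQ.eigenvalues i)⁻ : ℝ) : ℂ) := by
    rw [CFC.negPart_def, cfcₙ_eq_cfc, hPQ.trace_cfc]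
    rfl
  have hrhs : (CFC.sqrt ((P ^ 2 - Q ^ 2)⁻)).trace = ∑ i, ((√((hPQ2.eigenvalues i)⁻) : ℝ) : ℂ) := by
    rw [CFC.sqrt_eq_real_sqrt _ (CFC.negPart_nonneg _), CFC.negPart_def, cfcₙ_eq_cfc,
      cfcₙ_eq_cfc, ← cfc_comp' Real.sqrt _ _, hPQ2.trace_cfc]
    rfl
  rw [hlhs, hrhs] at h
  have h' : ∑ i, (hPQ.eigenvalues i)⁻ ≤ ∑ i, √((hPQ2.eigenvalues i)⁻) := by exact_mod_cast h
  simp only [negPart_eq_neg_inf_zero] at h'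
  rw [ge_iff_le, neg_le, ← Finset.sum_neg_distrib]
  exact h'
end

section
/- Let X and Y be self-adjoint operators on a Hilbert space, each bounded from below, such that the negative parts [X]₋ and [Y]₋ are trace class. Then tr[X + Y]₋ ≥ tr[X]₋ + tr[Y]₋, where [Z]₋ = min(Z, 0) denotes the negative part and tr[Z]₋ is the (nonpositive) sum of the negative eigenvalues. -/
/-!
For Hermitian `Z`, `tr[Z]₋` is the minimum of `Re tr (Z P)` over all `0 ≤ P ≤ 1`: in an
eigenbasis of `Z` the trace is `∑ λᵢ pᵢᵢ` with `pᵢᵢ ∈ [0, 1]`, and the minimum is attained at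
the spectral projection onto the negative eigenspaces. Testing `X` and `Y` against the minimiser
for `X + Y` gives the inequality, since a minimum of a sum dominates the sum of the minima.
-/

open Matrix

open scoped ComplexOrder

lemma min_zero_le_mul {R : Type*} [CommRing R] [LinearOrder R] [IsStrictOrderedRing R]
    {a t : R} (ht₀ : 0 ≤ t) (ht₁ : t ≤ 1) : min a 0 ≤ a * t := by
  rcases le_total a 0 with ha | ha
  · rw [min_eq_left ha]; nlinarith
  · rw [min_eq_right ha]; positivity

namespace Matrix.IsHermitian

variable {𝕜 ι : Type*} [RCLike 𝕜] [Fintype ι] [DecidableEq ι] {A : Matrix ι ι 𝕜}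

lemma trace_mul_eq_sum_eigenvalues_mul (hA : A.IsHermitian) (P : Matrix ι ι 𝕜) :
    trace (A * P) = ∑ i, (hA.eigenvalues i : 𝕜) *
      (star (hA.eigenvectorUnitary : Matrix ι ι 𝕜) * P * hA.eigenvectorUnitary) i i := by
  conv_lhs => rw [hA.spectral_theorem, Unitary.conjStarAlgAut_apply]
  simp only [mul_assoc]
  rw [trace_mul_comm]
  simp only [mul_assoc, trace, diag_apply, diagonal_mul, Function.comp_apply]

lemma sum_min_eigenvalues_le_re_trace_mul (hA : A.IsHermitian) {P : Matrix ι ι 𝕜}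
    (hP₀ : P.PosSemidef) (hP₁ : (1 - P).PosSemidef) :
    ∑ i, min (hA.eigenvalues i) 0 ≤ RCLike.re (trace (A * P)) := by
  set U : Matrix ι ι 𝕜 := (hA.eigenvectorUnitary : Matrix ι ι 𝕜)
  have hU : star U * U = 1 := Unitary.coe_star_mul_self hA.eigenvectorUnitary
  have hQ₀ : (star U * P * U).PosSemidef := hP₀.conjTranspose_mul_mul_same U
  have hQ₁ : (1 - star U * P * U).PosSemidef := by
    simpa [mul_sub, sub_mul, ← star_eq_conjTranspose, hU] using hP₁.conjTranspose_mul_mul_same U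
  rw [hA.trace_mul_eq_sum_eigenvalues_mul, map_sum]
  refine Finset.sum_le_sum fun i _ => ?_
  rw [RCLike.re_ofReal_mul]
  apply min_zero_le_mul
  · exact (RCLike.nonneg_iff.mp hQ₀.diag_nonneg).1
  · simpa using (RCLike.nonneg_iff.mp (hQ₁.diag_nonneg (i := i))).1

noncomputable def negSpectralProj (hA : A.IsHermitian) : Matrix ι ι 𝕜 :=
  (hA.eigenvectorUnitary : Matrix ι ι 𝕜) * diagonal (fun i => if hA.eigenvalues i < 0 then 1 else 0)
    * star (hA.eigenvectorUnitary : Matrix ι ι 𝕜)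

lemma posSemidef_negSpectralProj (hA : A.IsHermitian) : hA.negSpectralProj.PosSemidef := by
  refine (PosSemidef.diagonal fun i => ?_).mul_mul_conjTranspose_same _
  by_cases h : hA.eigenvalues i < 0 <;> simp [h]

lemma posSemidef_one_sub_negSpectralProj (hA : A.IsHermitian) :
    (1 - hA.negSpectralProj).PosSemidef := by
  unfold negSpectralProj
  set U : Matrix ι ι 𝕜 := (hA.eigenvectorUnitary : Matrix ι ι 𝕜)
  have hU : U * star U = 1 := Unitary.coe_mul_star_self hA.eigenvectorUnitary
  have : 1 - U * diagonal (fun i => if hA.eigenvalues i < 0 then 1 else 0) * star U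
      = U * diagonal (fun i => if hA.eigenvalues i < 0 then 0 else 1) * star U := by
    have hD : diagonal (fun i => if hA.eigenvalues i < 0 then (0 : 𝕜) else 1)
        = 1 - diagonal (fun i => if hA.eigenvalues i < 0 then 1 else 0) := by
      rw [← diagonal_one, diagonal_sub]
      congr 1
      ext i
      split_ifs <;> simp
    rw [hD, mul_sub, sub_mul, mul_one, hU]
  rw [this]
  refine (PosSemidef.diagonal fun i => ?_).mul_mul_conjTranspose_same _
  by_cases h : hA.eigenvalues i < 0 <;> simp [h]

lemma re_trace_mul_negSpectralProj (hA : A.IsHermitian) :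
    RCLike.re (trace (A * hA.negSpectralProj)) = ∑ i, min (hA.eigenvalues i) 0 := by
  rw [hA.trace_mul_eq_sum_eigenvalues_mul, map_sum, negSpectralProj]
  set U : Matrix ι ι 𝕜 := (hA.eigenvectorUnitary : Matrix ι ι 𝕜)
  have hU : star U * U = 1 := Unitary.coe_star_mul_self hA.eigenvectorUnitary
  refine Finset.sum_congr rfl fun i _ => ?_
  simp only [← mul_assoc, hU, one_mul]
  simp only [mul_assoc, hU, mul_one, diagonal_apply_eq]
  split_ifs with h
  · simp [min_eq_left h.le]
  · simp [min_eq_right (not_lt.mp h)]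

end Matrix.IsHermitian

/-- Superadditivity of the trace of the negative part:
tr[X + Y]₋ ≥ tr[X]₋ + tr[Y]₋, where tr[Z]₋ is the sum of the negative
eigenvalues of the self-adjoint operator Z. -/
theorem stmt_8 {n : ℕ} (X Y : Matrix (Fin n) (Fin n) ℂ)
    (hX : X.IsHermitian) (hY : Y.IsHermitian) (hXY : (X + Y).IsHermitian) :
    ∑ i, min (hXY.eigenvalues i) 0
      ≥ (∑ i, min (hX.eigenvalues i) 0) + ∑ i, min (hY.eigenvalues i) 0 := by
  have hP₀ := hXY.posSemidef_negSpectralProj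
  have hP₁ := hXY.posSemidef_one_sub_negSpectralProj
  calc (∑ i, min (hX.eigenvalues i) 0) + ∑ i, min (hY.eigenvalues i) 0
      ≤ RCLike.re (trace (X * hXY.negSpectralProj))
          + RCLike.re (trace (Y * hXY.negSpectralProj)) :=
        add_le_add (hX.sum_min_eigenvalues_le_re_trace_mul hP₀ hP₁)
          (hY.sum_min_eigenvalues_le_re_trace_mul hP₀ hP₁)
    _ = RCLike.re (trace ((X + Y) * hXY.negSpectralProj)) := by rw [add_mul, trace_add, map_add]
    _ = ∑ i, min (hXY.eigenvalues i) 0 := hXY.re_trace_mul_negSpectralProj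
end

section
/- Let f(u) = min{ℓ(u)^{-1/2}, ℓ(u)^{-2}} and ℓ(u) as above with r = h^{3/2}, 0 < h < 1. Then ∫_{𝒬} ℓ(u)^{-3} · ℓ(u)^{2−1/11} f(u)^{4−1/11} du ≤ C r^{-1/22}, where 𝒬 = {u : |u| ≤ 2R, d(u) ≥ r/3} and R = h^{-1}, and C depends only on M and the points r_k. -/
/-!
Using only `f ≤ ℓ^{-1/2}` and `ℓ ≥ d/100`, the integrand is at most `100^p d^{-p}` with
`p = 3 + 1/22`. On `{d ≥ r/3}`, since `d` is the distance to the nearest `r_k`, this is at most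
`100^p ∑_k max(|u - r_k|, r/3)^{-p}`: a sum of translates of a truncated power, integrable on `ℝ³`
because `p > 3`. Rescaling `x ↦ x/s` shows that the truncated power at level `s` has integral
`s^{3-p}` times its integral at level `1`, and `(r/3)^{3-p} = 3^{1/22} r^{-1/22}`.
-/

open MeasureTheory Module

section TruncatedPower

variable {E : Type*} [NormedAddCommGroup E] [NormedSpace ℝ E] {p s : ℝ}

theorem max_norm_rpow_neg_eq_mul (hs : 0 < s) (x : E) :
    max ‖x‖ s ^ (-p) = s ^ (-p) * max ‖s⁻¹ • x‖ 1 ^ (-p) := by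
  have hscale : max ‖x‖ s = s * max ‖s⁻¹ • x‖ 1 := by
    rw [norm_smul, Real.norm_of_nonneg (inv_nonneg.mpr hs.le), mul_max_of_nonneg _ _ hs.le,
      mul_inv_cancel_left₀ hs.ne', mul_one]
  rw [hscale, Real.mul_rpow hs.le (zero_le_one.trans (le_max_right _ _))]

variable [FiniteDimensional ℝ E] [MeasurableSpace E] [BorelSpace E] (μ : Measure E)
  [μ.IsAddHaarMeasure]

theorem integrable_max_norm_one_rpow_neg (hp : (finrank ℝ E : ℝ) < p) :
    Integrable (fun x : E => max ‖x‖ 1 ^ (-p)) μ := by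
  have hp0 : 0 ≤ p := (Nat.cast_nonneg _).trans hp.le
  refine ((integrable_one_add_norm hp).const_mul (2 ^ p)).mono'
    (Measurable.pow_const (by fun_prop) _).aestronglyMeasurable
    (.of_forall fun x => ?_)
  have hmax : (1 + ‖x‖) / 2 ≤ max ‖x‖ 1 := by
    have := le_max_left ‖x‖ 1; have := le_max_right ‖x‖ 1; linarith
  rw [Real.norm_of_nonneg (Real.rpow_nonneg (zero_le_one.trans (le_max_right _ _)) _)]
  calc max ‖x‖ 1 ^ (-p) ≤ ((1 + ‖x‖) / 2) ^ (-p) :=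
        Real.rpow_le_rpow_of_nonpos (by positivity) hmax (neg_nonpos.mpr hp0)
    _ = 2 ^ p * (1 + ‖x‖) ^ (-p) := by
        rw [Real.div_rpow (by positivity) zero_le_two, Real.rpow_neg zero_le_two, div_inv_eq_mul,
          mul_comm]

theorem integral_max_norm_one_rpow_neg_pos (hp : (finrank ℝ E : ℝ) < p) :
    0 < ∫ x, max ‖x‖ 1 ^ (-p) ∂μ := by
  have hpos : ∀ x : E, 0 < max ‖x‖ 1 ^ (-p) :=
    fun x => Real.rpow_pos_of_pos (lt_max_of_lt_right one_pos) _
  rw [integral_pos_iff_support_of_nonneg (fun x => (hpos x).le)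
    (integrable_max_norm_one_rpow_neg μ hp)]
  have hsupp : Function.support (fun x : E => max ‖x‖ 1 ^ (-p)) = Set.univ :=
    Set.eq_univ_of_forall fun x => (hpos x).ne'
  rw [hsupp]
  exact isOpen_univ.measure_pos μ Set.univ_nonempty

theorem integrable_max_norm_rpow_neg (hs : 0 < s) (hp : (finrank ℝ E : ℝ) < p) :
    Integrable (fun x : E => max ‖x‖ s ^ (-p)) μ := by
  simp_rw [max_norm_rpow_neg_eq_mul hs]
  exact ((integrable_max_norm_one_rpow_neg μ hp).comp_smul (inv_ne_zero hs.ne')).const_mul _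

theorem integral_max_norm_rpow_neg (hs : 0 < s) :
    ∫ x, max ‖x‖ s ^ (-p) ∂μ
      = s ^ ((finrank ℝ E : ℝ) - p) * ∫ x, max ‖x‖ 1 ^ (-p) ∂μ := by
  simp_rw [max_norm_rpow_neg_eq_mul hs]
  rw [integral_const_mul, Measure.integral_comp_inv_smul μ (fun x => max ‖x‖ 1 ^ (-p)) s,
    abs_of_pos (pow_pos hs _), smul_eq_mul, Real.rpow_sub hs, Real.rpow_natCast,
    Real.rpow_neg hs.le]
  ring

theorem integral_sum_max_norm_sub_rpow_neg {ι : Type*} [Fintype ι] (c : ι → E) (hs : 0 < s)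
    (hp : (finrank ℝ E : ℝ) < p) :
    Integrable (fun x => ∑ k, max ‖x - c k‖ s ^ (-p)) μ ∧
      ∫ x, ∑ k, max ‖x - c k‖ s ^ (-p) ∂μ
        = Fintype.card ι * s ^ ((finrank ℝ E : ℝ) - p)
          * ∫ x, max ‖x‖ 1 ^ (-p) ∂μ := by
  have hint : ∀ k, Integrable (fun x => max ‖x - c k‖ s ^ (-p)) μ :=
    fun k => (integrable_max_norm_rpow_neg μ hs hp).comp_sub_right (c k)
  refine ⟨integrable_finsetSum _ fun k _ => hint k, ?_⟩
  rw [integral_finsetSum _ fun k _ => hint k]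
  simp_rw [integral_sub_right_eq_self (fun x => max ‖x‖ s ^ (-p)),
    integral_max_norm_rpow_neg μ hs, Finset.sum_const, Finset.card_univ, nsmul_eq_mul]
  ring

end TruncatedPower

theorem rpow_iInf_dist_le_sum_max_norm_sub_rpow {E ι : Type*} [SeminormedAddCommGroup E]
    [Fintype ι] [Nonempty ι] (c : ι → E) {u : E} {s q : ℝ} (hs : s ≤ ⨅ k, dist u (c k)) :
    (⨅ k, dist u (c k)) ^ q ≤ ∑ k, max ‖u - c k‖ s ^ q := by
  obtain ⟨k₀, hk₀⟩ := exists_eq_ciInf_of_finite (f := fun k => dist u (c k))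
  have hterm : max ‖u - c k₀‖ s ^ q = (⨅ k, dist u (c k)) ^ q := by
    rw [← dist_eq_norm, hk₀, max_eq_left hs]
  rw [← hterm]
  exact Finset.single_le_sum (f := fun k => max ‖u - c k‖ s ^ q)
    (fun k _ => Real.rpow_nonneg ((norm_nonneg _).trans (le_max_left _ _)) _) (Finset.mem_univ k₀)

theorem rpow_mul_rpow_mul_min_rpow_le {ℓ y a b e c : ℝ} (hℓ : 0 < ℓ) (hy : 0 ≤ y)
    (hc : 0 ≤ c) :
    ℓ ^ a * (ℓ ^ b * min (ℓ ^ e) y ^ c) ≤ ℓ ^ (a + b + e * c) := by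
  have hmin : min (ℓ ^ e) y ^ c ≤ ℓ ^ (e * c) := by
    rw [Real.rpow_mul hℓ.le]
    exact Real.rpow_le_rpow (le_min (by positivity) hy) (min_le_left _ _) hc
  calc ℓ ^ a * (ℓ ^ b * min (ℓ ^ e) y ^ c) ≤ ℓ ^ a * (ℓ ^ b * ℓ ^ (e * c)) := by
        gcongr
    _ = ℓ ^ (a + b + e * c) := by rw [Real.rpow_add hℓ, Real.rpow_add hℓ, mul_assoc]

theorem rpow_neg_sqrt_sq_add_sq_le {r d p : ℝ} (hd : 0 < d) (hp : 0 ≤ p) :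
    ((1 / 100) * √(r ^ 2 + d ^ 2)) ^ (-p) ≤ 100 ^ p * d ^ (-p) := by
  have hsqrt : d ≤ √(r ^ 2 + d ^ 2) := Real.le_sqrt_of_sq_le (by nlinarith [sq_nonneg r])
  calc ((1 / 100) * √(r ^ 2 + d ^ 2)) ^ (-p) ≤ ((1 / 100) * d) ^ (-p) :=
        Real.rpow_le_rpow_of_nonpos (by positivity) (by linarith) (neg_nonpos.mpr hp)
    _ = 100 ^ p * d ^ (-p) := by
        rw [Real.mul_rpow (by norm_num) hd.le, one_div, Real.inv_rpow (by norm_num),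
          Real.rpow_neg (by norm_num : (0 : ℝ) ≤ 100), inv_inv]

theorem integrand_le_sum_max_norm_sub_rpow {E ι : Type*} [SeminormedAddCommGroup E]
    [Fintype ι] [Nonempty ι] (c : ι → E) {u : E} {r s d ℓ f : ℝ} (hs : 0 < s) (hsd : s ≤ d)
    (hd : d = ⨅ k, dist u (c k)) (hℓ : ℓ = 1 / 100 * √(r ^ 2 + d ^ 2))
    (hf : f = min (ℓ ^ (-(1 : ℝ) / 2)) (ℓ ^ (-2 : ℝ))) :
    ℓ ^ (-3 : ℝ) * (ℓ ^ (2 - 1 / 11 : ℝ) * f ^ (4 - 1 / 11 : ℝ))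
      ≤ 100 ^ (67 / 22 : ℝ) * ∑ k, max ‖u - c k‖ s ^ (-(67 / 22) : ℝ) := by
  have hℓ0 : 0 < ℓ := by rw [hℓ]; have := hs.trans_le hsd; positivity
  rw [hf]
  calc _ ≤ ℓ ^ (-3 + (2 - 1 / 11) + -(1 : ℝ) / 2 * (4 - 1 / 11)) :=
        rpow_mul_rpow_mul_min_rpow_le hℓ0 (by positivity) (by norm_num)
    _ = ℓ ^ (-(67 / 22) : ℝ) := by norm_num
    _ ≤ 100 ^ (67 / 22 : ℝ) * d ^ (-(67 / 22) : ℝ) := by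
        rw [hℓ]; exact rpow_neg_sqrt_sq_add_sq_le (hs.trans_le hsd) (by norm_num)
    _ ≤ _ := by
        rw [hd] at hsd ⊢
        gcongr
        exact rpow_iInf_dist_le_sum_max_norm_sub_rpow c hsd

theorem measurable_iInf_dist {E ι : Type*} [PseudoMetricSpace E] [MeasurableSpace E]
    [OpensMeasurableSpace E] [Countable ι] (c : ι → E) :
    Measurable fun u => ⨅ k, dist u (c k) :=
  Measurable.iInf fun _ => (continuous_id.dist continuous_const).measurable

theorem stmt_15 (M : ℕ) (hM : 0 < M) (rk : Fin M → EuclideanSpace ℝ (Fin 3)) :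
    ∃ C : ℝ, 0 < C ∧
      ∀ h : ℝ, 0 < h → h < 1 →
        ∀ (d ℓ f : EuclideanSpace ℝ (Fin 3) → ℝ),
          (∀ u, d u = ⨅ k : Fin M, dist u (rk k)) →
          (∀ u, ℓ u = (1 / 100) * Real.sqrt ((h ^ (3 / 2 : ℝ)) ^ 2 + d u ^ 2)) →
          (∀ u, f u = min (ℓ u ^ (-(1 : ℝ) / 2)) (ℓ u ^ (-2 : ℝ))) →
          ∫ u in {u : EuclideanSpace ℝ (Fin 3) |
                    ‖u‖ ≤ 2 * h⁻¹ ∧ h ^ (3 / 2 : ℝ) / 3 ≤ d u},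
              ℓ u ^ (-3 : ℝ) * (ℓ u ^ (2 - 1 / 11 : ℝ) * f u ^ (4 - 1 / 11 : ℝ))
            ≤ C * (h ^ (3 / 2 : ℝ)) ^ (-(1 : ℝ) / 22) := by
  have : Nonempty (Fin M) := ⟨⟨0, hM⟩⟩
  set p : ℝ := 67 / 22
  have hp : (finrank ℝ (EuclideanSpace ℝ (Fin 3)) : ℝ) < p := by
    rw [finrank_euclideanSpace_fin]; norm_num
  set I := ∫ x : EuclideanSpace ℝ (Fin 3), max ‖x‖ 1 ^ (-p)
  have hI : 0 < I := integral_max_norm_one_rpow_neg_pos volume hp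
  refine ⟨M * 100 ^ p * 3 ^ (1 / 22 : ℝ) * I, by positivity, ?_⟩
  intro h hh0 _ d ℓ f hd hℓ hf
  set r := h ^ (3 / 2 : ℝ)
  have hr : 0 < r := by positivity
  set S := {u : EuclideanSpace ℝ (Fin 3) | ‖u‖ ≤ 2 * h⁻¹ ∧ r / 3 ≤ d u} with hSdef
  set G := fun u : EuclideanSpace ℝ (Fin 3) => 100 ^ p * ∑ k, max ‖u - rk k‖ (r / 3) ^ (-p)
  obtain ⟨hGint, hGval⟩ :=
    integral_sum_max_norm_sub_rpow_neg volume rk (by positivity : 0 < r / 3) hp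
  have hS : MeasurableSet S := by
    rw [hSdef, funext hd]
    exact (measurableSet_le measurable_norm measurable_const).inter
      (measurableSet_le measurable_const (measurable_iInf_dist rk))
  have hbound : ∀ u ∈ S,
      ℓ u ^ (-3 : ℝ) * (ℓ u ^ (2 - 1 / 11 : ℝ) * f u ^ (4 - 1 / 11 : ℝ)) ≤ G u :=
    fun u hu => integrand_le_sum_max_norm_sub_rpow rk (by positivity) hu.2 (hd u) (hℓ u) (hf u)
  calc _ ≤ ∫ u in S, G u :=
        integral_mono_of_nonneg (.of_forall fun u => by rw [hf u, hℓ u]; positivity)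
          (hGint.const_mul _).integrableOn (ae_restrict_of_forall_mem hS hbound)
    _ ≤ ∫ u, G u :=
        setIntegral_le_integral (hGint.const_mul _) (.of_forall fun u => by positivity)
    _ = M * 100 ^ p * 3 ^ (1 / 22 : ℝ) * I * r ^ (-(1 : ℝ) / 22) := by
        rw [integral_const_mul, hGval, Fintype.card_fin, finrank_euclideanSpace_fin,
          Nat.cast_ofNat, show (3 : ℝ) - p = -(1 / 22) by norm_num [p],
          Real.div_rpow hr.le (by norm_num), Real.rpow_neg (by norm_num : (0 : ℝ) ≤ 3), neg_div,
          div_inv_eq_mul]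
        ring
end
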